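/- arXiv:1912.08999 — 6 statements merged into one kernel-verified Lean document; each statement's English description precedes it below -/
import Mathlib

section
/- Let G be a finite abelian group and A a nonempty subset of G with |A - A| < (3/2)|A|. Then A - A is a subgroup of G. -/
open scoped Pointwise

theorem stmt2 {G : Type*} [AddCommGroup G] [Fintype G] [DecidableEq G]
    (A : Finset G) (hA : A.Nonempty)
    (h : 2 * (A - A).card < 3 * A.card) :
    ∃ H : AddSubgroup G, (↑(A - A) : Set G) = (H : Set G) := by
  classical
  have key : ∀ x ∈ A - A, 2 * A.card ≤ (A ∩ (x +ᵥ A)).card + (A - A).card := by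
    intro x hx
    obtain ⟨a, ha, b, hb, rfl⟩ := Finset.mem_sub.1 hx
    have hsub : A ∪ ((a - b) +ᵥ A) ⊆ a +ᵥ (A - A) := by
      intro c hc
      rcases Finset.mem_union.1 hc with hc | hc
      · exact Finset.mem_vadd_finset.2 ⟨c - a, Finset.sub_mem_sub hc ha, by simp only [vadd_eq_add]; abel⟩
      · obtain ⟨d, hd, rfl⟩ := Finset.mem_vadd_finset.1 hc
        exact Finset.mem_vadd_finset.2 ⟨d - b, Finset.sub_mem_sub hd hb, by simp only [vadd_eq_add]; abel⟩
    have h1 : (A ∪ ((a - b) +ᵥ A)).card + (A ∩ ((a - b) +ᵥ A)).card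
        = A.card + ((a - b) +ᵥ A).card := Finset.card_union_add_card_inter _ _
    have h2 : ((a - b) +ᵥ A).card = A.card := Finset.card_vadd_finset _ _
    have h3 : (A ∪ ((a - b) +ᵥ A)).card ≤ (a +ᵥ (A - A)).card :=
      Finset.card_le_card hsub
    have h4 : (a +ᵥ (A - A)).card = (A - A).card := Finset.card_vadd_finset _ _
    omega
  have neg_mem : ∀ x ∈ A - A, -x ∈ A - A := by
    intro x hx
    obtain ⟨a, ha, b, hb, rfl⟩ := Finset.mem_sub.1 hx
    exact Finset.mem_sub.2 ⟨b, hb, a, ha, by abel⟩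
  have add_mem : ∀ x ∈ A - A, ∀ y ∈ A - A, x + y ∈ A - A := by
    intro x hx y hy
    have hy' := neg_mem y hy
    have k1 := key x hx
    have k2 := key (-y) hy'
    have hne : ((A ∩ (x +ᵥ A)) ∩ (A ∩ ((-y) +ᵥ A))).Nonempty := by
      rw [Finset.nonempty_iff_ne_empty]
      intro hemp
      have hdisj : Disjoint (A ∩ (x +ᵥ A)) (A ∩ ((-y) +ᵥ A)) :=
        Finset.disjoint_iff_inter_eq_empty.2 hemp
      have hle : (A ∩ (x +ᵥ A)).card + (A ∩ ((-y) +ᵥ A)).card ≤ A.card := by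
        rw [← Finset.card_union_of_disjoint hdisj]
        exact Finset.card_le_card (Finset.union_subset
          (Finset.inter_subset_left) (Finset.inter_subset_left))
      omega
    obtain ⟨c, hc⟩ := hne
    simp only [Finset.mem_inter] at hc
    obtain ⟨⟨-, hc1⟩, -, hc2⟩ := hc
    obtain ⟨a1, ha1, rfl⟩ := Finset.mem_vadd_finset.1 hc1
    obtain ⟨a2, ha2, he⟩ := Finset.mem_vadd_finset.1 hc2
    have hxy : x + y = a2 - a1 := by
      have he' : -y + a2 = x + a1 := he
      have h5 : a2 = x + a1 + y := by rw [← he']; abel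
      rw [h5]; abel
    rw [hxy]
    exact Finset.sub_mem_sub ha2 ha1
  refine ⟨⟨⟨⟨(↑(A - A) : Set G), ?_⟩, ?_⟩, ?_⟩, rfl⟩
  · intro x y hx hy
    exact add_mem x hx y hy
  · obtain ⟨a, ha⟩ := hA
    have : (0 : G) ∈ A - A := Finset.mem_sub.2 ⟨a, ha, a, ha, sub_self a⟩
    exact this
  · intro x hx
    exact neg_mem x hx
end

section
/- Let K be a compact, connected, metrizable abelian group with Haar probability measure m. Then for all measurable subsets I, J of K, the (outer) Haar measure of the difference set J - I satisfies m(J - I) ≥ min(1, m(I) + m(J)), provided I and J are nonempty. -/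
/-!
Suppose `μ (A + B) < min 1 (μ A + μ B)` for nonempty compact `A`, `B`, and put `S = A + B`.
The measure is upper semicontinuous on the compact hyperspace of nonempty compacta, so there
is a pair `(A', B')` with `A' + B' ⊆ S` maximizing `μ A' + μ B'` and, among those maximizers,
`μ A'`. Comparing `(A', B')` with the transformed pairs `(A' ∪ (e + A'), B' ∩ (B' - e))` and
`(A' ∩ (A' - e), B' ∪ (e + B'))` shows that every small translation `e` maps `A'` into itself
up to a null set. Such `e` form an open subgroup, which is all of `K` by connectedness; hence
the proper compact subset `A'` is null, contradicting `μ A' + μ B' > μ S ≥ μ B'`.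
-/

open MeasureTheory Set Filter Topology TopologicalSpace
open scoped Pointwise ENNReal

section Translation

variable {G : Type*} [AddGroup G] [MeasurableSpace G] {μ : Measure G} {s : Set G}

theorem measure_vadd_sdiff_eq_measure_sdiff_neg_vadd [μ.IsAddLeftInvariant] (g : G) :
    μ ((g +ᵥ s) \ s) = μ (s \ (-g +ᵥ s)) := by
  rw [← measure_vadd μ (-g), vadd_set_sdiff, neg_vadd_vadd]

theorem measure_inter_neg_vadd_add_measure_vadd_sdiff [MeasurableAdd G] [μ.IsAddLeftInvariant]
    (hs : MeasurableSet s) (g : G) : μ (s ∩ (-g +ᵥ s)) + μ ((g +ᵥ s) \ s) = μ s := by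
  rw [measure_vadd_sdiff_eq_measure_sdiff_neg_vadd, measure_inter_add_sdiff _ (hs.const_vadd _)]

theorem measure_union_vadd [MeasurableAdd G] (hs : MeasurableSet s) (g : G) :
    μ (s ∪ (g +ᵥ s)) = μ s + μ ((g +ᵥ s) \ s) := by
  rw [← union_sdiff_self, measure_union disjoint_sdiff_self_right ((hs.const_vadd g).diff hs)]

theorem measure_union_vadd_add_measure_inter_neg_vadd [MeasurableAdd G] [μ.IsAddLeftInvariant]
    {t : Set G} (hs : MeasurableSet s) (ht : MeasurableSet t) (g : G) :
    μ (s ∪ (g +ᵥ s)) + μ (t ∩ (-g +ᵥ t)) + μ ((g +ᵥ t) \ t) =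
      μ s + μ t + μ ((g +ᵥ s) \ s) := by
  rw [measure_union_vadd hs, add_assoc, measure_inter_neg_vadd_add_measure_vadd_sdiff ht,
    add_right_comm]

theorem vadd_ae_eq_self_of_measure_vadd_sdiff_eq_zero [MeasurableAdd G] [μ.IsAddLeftInvariant]
    [IsFiniteMeasure μ] (hs : MeasurableSet s) {g : G} (h : μ ((g +ᵥ s) \ s) = 0) :
    g +ᵥ s =ᵐ[μ] s := by
  refine ae_eq_set.2 ⟨h, ?_⟩
  have hinter : μ (s ∩ (g +ᵥ s)) = μ s := by
    simpa [h, measure_vadd, inter_comm] using measure_inter_add_sdiff (μ := μ) (g +ᵥ s) hs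
  rw [← sdiff_self_inter, measure_sdiff inter_subset_left
    (hs.inter (hs.const_vadd g)).nullMeasurableSet (measure_ne_top μ _), hinter, tsub_self]

theorem measure_le_of_add_subset [μ.IsAddLeftInvariant] {t u : Set G} (hs : s.Nonempty)
    (h : s + t ⊆ u) : μ t ≤ μ u := by
  obtain ⟨x, hx⟩ := hs
  rw [← measure_vadd μ x t]
  exact measure_mono ((vadd_set_subset_add hx).trans h)

end Translation

theorem union_vadd_add_inter_neg_vadd_subset {G : Type*} [AddCommGroup G] {s t u : Set G}
    (h : s + t ⊆ u) (e : G) : (s ∪ (e +ᵥ s)) + (t ∩ (-e +ᵥ t)) ⊆ u := by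
  rintro _ ⟨x, hx | ⟨x, hx, rfl⟩, y, ⟨hy, y', hy', rfl⟩, rfl⟩
  · exact h (add_mem_add hx hy)
  · have hsum : e + x + (-e + y') = x + y' := by abel
    simpa [hsum] using h (add_mem_add hx hy')

theorem AddSubgroup.eq_top_of_mem_nhds_zero {G : Type*} [AddGroup G] [TopologicalSpace G]
    [IsTopologicalAddGroup G] [ConnectedSpace G] {H : AddSubgroup G} (h : (H : Set G) ∈ 𝓝 0) :
    H = ⊤ := by
  have hH : IsOpen (H : Set G) := H.isOpen_of_mem_nhds h
  exact SetLike.coe_injective <|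
    IsClopen.eq_univ ⟨H.isClosed_of_isOpen hH, hH⟩ ⟨0, H.zero_mem⟩

theorem IsCompact.eventually_measure_vadd_sdiff_lt {G : Type*} [AddGroup G] [TopologicalSpace G]
    [ContinuousAdd G] [T2Space G] [MeasurableSpace G] [OpensMeasurableSpace G]
    {μ : Measure G} [μ.OuterRegular] {s : Set G} (hs : IsCompact s) (hμs : μ s ≠ ∞)
    {ε : ℝ≥0∞} (hε : ε ≠ 0) : ∀ᶠ g in 𝓝 (0 : G), μ ((g +ᵥ s) \ s) < ε := by
  obtain ⟨U, hsU, hU, hUs⟩ := Set.exists_isOpen_lt_add s hμs hε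
  obtain ⟨V, hV, hVs⟩ := compact_open_separated_add_left hs hU hsU
  filter_upwards [hV] with g hg
  calc μ ((g +ᵥ s) \ s) ≤ μ (U \ s) :=
        measure_mono (sdiff_subset_sdiff_left ((vadd_set_subset_add hg).trans hVs))
    _ < ε := measure_sdiff_lt_of_lt_add hs.measurableSet.nullMeasurableSet hsU hμs hUs

theorem measure_eq_zero_of_aestabilizer_eq_top {G : Type*} [AddGroup G] [TopologicalSpace G]
    [ContinuousAdd G] [T2Space G] [MeasurableSpace G] [MeasurableAdd G]
    {μ : Measure G} [μ.IsAddLeftInvariant] {s : Set G} (hs : IsCompact s) (hs' : s ≠ univ)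
    (h : AddAction.aestabilizer G μ s = ⊤) : μ s = 0 := by
  obtain ⟨u, hu⟩ := (ne_univ_iff_exists_notMem s).1 hs'
  refine hs.measure_zero_of_nhdsWithin fun a _ => ⟨s ∩ ((a - u) +ᵥ sᶜ), ?_, ?_⟩
  · refine inter_mem_nhdsWithin _ ((hs.isClosed.isOpen_compl.vadd _).mem_nhds ?_)
    exact ⟨u, hu, by simp [vadd_eq_add]⟩
  · have hstab : (u - a) +ᵥ s =ᵐ[μ] s := by
      simpa using h.ge (AddSubgroup.mem_top (u - a))
    rw [← measure_vadd μ (u - a), vadd_set_inter, vadd_vadd, vadd_set_compl]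
    simpa [← sdiff_eq] using (ae_eq_set.1 hstab).1

theorem upperSemicontinuous_measure_nonemptyCompacts {X : Type*} [TopologicalSpace X]
    [MeasurableSpace X] (μ : Measure X) [μ.OuterRegular] :
    UpperSemicontinuous fun A : NonemptyCompacts X => μ A := by
  intro A y hy
  obtain ⟨U, hAU, hU, hUy⟩ := Set.exists_isOpen_lt_of_lt _ _ hy
  filter_upwards [(NonemptyCompacts.isOpen_subsets_of_isOpen hU).mem_nhds hAU] with B hB
  exact (measure_mono hB).trans_lt hUy

theorem isClosed_setOf_add_subset {G : Type*} [TopologicalSpace G] [Add G] [ContinuousAdd G]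
    {u : Set G} (hu : IsClosed u) :
    IsClosed {p : NonemptyCompacts G × NonemptyCompacts G | (p.1 : Set G) + p.2 ⊆ u} := by
  have hcont : Continuous fun p : NonemptyCompacts G × NonemptyCompacts G =>
      (p.1 ×ˢ p.2).map (fun q : G × G => q.1 + q.2) continuous_add :=
    continuous_add.nonemptyCompacts_map.comp NonemptyCompacts.continuous_prod
  convert (NonemptyCompacts.isClosed_subsets_of_isClosed hu).preimage hcont using 1
  ext p
  simp [image_prod, image2_add]

theorem IsCompact.exists_isMaxOn_isMaxOn_setOf_le {X β γ : Type*} [TopologicalSpace X]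
    [LinearOrder β] [LinearOrder γ] {C : Set X} (hC : IsCompact C) (hne : C.Nonempty)
    {f : X → β} {g : X → γ} (hf : UpperSemicontinuous f) (hg : UpperSemicontinuous g) :
    ∃ p ∈ C, IsMaxOn f C p ∧ IsMaxOn g {q ∈ C | f p ≤ f q} p := by
  obtain ⟨p₀, hp₀, hmax₀⟩ := (hf.upperSemicontinuousOn C).exists_isMaxOn hne hC
  have hC' : IsCompact (C ∩ f ⁻¹' Ici (f p₀)) := hC.inter_right (hf.isClosed_preimage _)
  obtain ⟨p, ⟨hpC, hp⟩, hmax⟩ :=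
    (hg.upperSemicontinuousOn _).exists_isMaxOn (s := C ∩ f ⁻¹' Ici (f p₀))
      ⟨p₀, hp₀, le_refl (f p₀)⟩ hC'
  exact ⟨p, hpC, fun q hq => (hmax₀ hq).trans hp,
    fun q ⟨hqC, hq⟩ => hmax ⟨hqC, le_trans hp hq⟩⟩

section MaximalPair

variable {K : Type*} [AddCommGroup K] [TopologicalSpace K] [MeasurableSpace K]
  {μ : Measure K} {S : Set K} {A B : NonemptyCompacts K}

structure IsMaximalPair (μ : Measure K) (S : Set K) (A B : NonemptyCompacts K) : Prop where
  add_subset : (A : Set K) + B ⊆ S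
  sum_max : ∀ X Y : NonemptyCompacts K, (X : Set K) + Y ⊆ S → μ X + μ Y ≤ μ A + μ B
  fst_max : ∀ X Y : NonemptyCompacts K, (X : Set K) + Y ⊆ S → μ A + μ B ≤ μ X + μ Y →
    μ X ≤ μ A

theorem exists_isMaximalPair [ContinuousAdd K] [CompactSpace K] [μ.OuterRegular]
    (hS : IsClosed S) (hAB : (A : Set K) + B ⊆ S) :
    ∃ A' B' : NonemptyCompacts K, IsMaximalPair μ S A' B' ∧ μ A + μ B ≤ μ A' + μ B' := by
  have husc := upperSemicontinuous_measure_nonemptyCompacts μ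
  obtain ⟨p, hp, hsum, hfst⟩ :=
    (isClosed_setOf_add_subset hS).isCompact.exists_isMaxOn_isMaxOn_setOf_le ⟨(A, B), hAB⟩
      ((husc.comp continuous_fst).add (husc.comp continuous_snd)) (husc.comp continuous_fst)
  exact ⟨p.1, p.2, ⟨hp, fun X Y h => hsum (a := (X, Y)) h,
    fun X Y h hle => hfst (a := (X, Y)) ⟨h, hle⟩⟩, hsum (a := (A, B)) hAB⟩

section Transform

variable [ContinuousAdd K] [T2Space K] [BorelSpace K] [μ.IsAddLeftInvariant] [IsFiniteMeasure μ]

theorem IsMaximalPair.measure_vadd_sdiff_le (h : IsMaximalPair μ S A B) {e : K}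
    (he : μ ((e +ᵥ (A : Set K)) \ A) + μ S < μ A + μ B) :
    μ ((e +ᵥ (B : Set K)) \ B) ≤ μ ((e +ᵥ (A : Set K)) \ A) := by
  have hA := A.isCompact
  have hB := B.isCompact
  have hA' : ((A : Set K) ∩ (-e +ᵥ (A : Set K))).Nonempty := by
    by_contra! h0
    have hAu : μ A = μ ((e +ᵥ (A : Set K)) \ A) := by
      simpa [h0] using (measure_inter_neg_vadd_add_measure_vadd_sdiff hA.measurableSet e).symm
    have hBS : μ B ≤ μ S := measure_le_of_add_subset (μ := μ) A.nonempty h.add_subset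
    exact he.not_ge (by rw [← hAu]; gcongr)
  have hrev :
      μ ((A : Set K) ∩ (-e +ᵥ (A : Set K))) + μ ((B : Set K) ∪ (e +ᵥ (B : Set K))) ≤
        μ A + μ B := h.sum_max ⟨⟨_, hA.inter_right (hA.vadd _).isClosed⟩, hA'⟩
    ⟨⟨_, hB.union (hB.vadd e)⟩, B.nonempty.mono subset_union_left⟩
    ((add_comm _ _).le.trans (union_vadd_add_inter_neg_vadd_subset
      ((add_comm _ _).le.trans h.add_subset) e))
  refine (ENNReal.add_le_add_iff_left (a := μ B + μ A) (by finiteness)).1 ?_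
  rw [← measure_union_vadd_add_measure_inter_neg_vadd hB.measurableSet hA.measurableSet e]
  gcongr ?_ + _
  rw [add_comm, add_comm (μ B)]
  exact hrev

theorem IsMaximalPair.measure_vadd_sdiff_eq_zero (h : IsMaximalPair μ S A B) {e : K}
    (he : μ ((e +ᵥ (A : Set K)) \ A) + μ S < μ A + μ B) :
    μ ((e +ᵥ (A : Set K)) \ A) = 0 := by
  have hA := A.isCompact
  have hB := B.isCompact
  have hvu := h.measure_vadd_sdiff_le he
  have hB' : ((B : Set K) ∩ (-e +ᵥ (B : Set K))).Nonempty := by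
    by_contra! h0
    have hBv : μ B = μ ((e +ᵥ (B : Set K)) \ B) := by
      simpa [h0] using (measure_inter_neg_vadd_add_measure_vadd_sdiff hB.measurableSet e).symm
    have hAS : μ A ≤ μ S :=
      measure_le_of_add_subset B.nonempty ((add_comm _ _).le.trans h.add_subset)
    exact he.not_ge (by rw [hBv, add_comm (μ ((e +ᵥ (A : Set K)) \ A))]; gcongr)
  have hfwd : μ A + μ B ≤
      μ ((A : Set K) ∪ (e +ᵥ (A : Set K))) + μ ((B : Set K) ∩ (-e +ᵥ (B : Set K))) := by
    refine (ENNReal.add_le_add_iff_right (measure_ne_top μ ((e +ᵥ (B : Set K)) \ B))).1 ?_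
    rw [measure_union_vadd_add_measure_inter_neg_vadd hA.measurableSet hB.measurableSet e]
    gcongr
  have hfst : μ ((A : Set K) ∪ (e +ᵥ (A : Set K))) ≤ μ A :=
    h.fst_max ⟨⟨_, hA.union (hA.vadd e)⟩, A.nonempty.mono subset_union_left⟩
      ⟨⟨_, hB.inter_right (hB.vadd _).isClosed⟩, hB'⟩
      (union_vadd_add_inter_neg_vadd_subset h.add_subset e) hfwd
  rw [measure_union_vadd hA.measurableSet] at hfst
  exact nonpos_iff_eq_zero.1 <| (ENNReal.add_le_add_iff_left (measure_ne_top μ A)).1 <| by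
    simpa using hfst

end Transform

variable [IsTopologicalAddGroup K] [T2Space K] [BorelSpace K] [μ.IsAddLeftInvariant]

theorem IsMaximalPair.aestabilizer_eq_top [ConnectedSpace K] [IsFiniteMeasure μ] [μ.OuterRegular]
    (h : IsMaximalPair μ S A B) (hS : μ S < μ A + μ B) :
    AddAction.aestabilizer K μ (A : Set K) = ⊤ := by
  refine AddSubgroup.eq_top_of_mem_nhds_zero ?_
  filter_upwards [A.isCompact.eventually_measure_vadd_sdiff_lt (measure_ne_top μ _)
    (tsub_pos_of_lt hS).ne'] with e he
  exact vadd_ae_eq_self_of_measure_vadd_sdiff_eq_zero A.isCompact.measurableSet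
    (h.measure_vadd_sdiff_eq_zero (lt_tsub_iff_right.1 he))

theorem min_one_add_le_measure_add [CompactSpace K] [ConnectedSpace K] [IsProbabilityMeasure μ]
    [μ.OuterRegular] {A B : Set K} (hA : IsCompact A) (hB : IsCompact B) (hA₀ : A.Nonempty)
    (hB₀ : B.Nonempty) : min 1 (μ A + μ B) ≤ μ (A + B) := by
  by_contra! hlt
  obtain ⟨A', B', hmax, hle⟩ := exists_isMaximalPair (μ := μ) (hA.add hB).isClosed
    (A := ⟨⟨A, hA⟩, hA₀⟩) (B := ⟨⟨B, hB⟩, hB₀⟩) subset_rfl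
  have hS : μ (A + B) < μ A' + μ B' := (hlt.trans_le (min_le_right _ _)).trans_le hle
  have hA'S : μ A' ≤ μ (A + B) :=
    measure_le_of_add_subset B'.nonempty ((add_comm _ _).le.trans hmax.add_subset)
  have hB'S : μ B' ≤ μ (A + B) := measure_le_of_add_subset A'.nonempty hmax.add_subset
  have hA'0 : μ (A' : Set K) = 0 := by
    refine measure_eq_zero_of_aestabilizer_eq_top A'.isCompact (fun hA'univ => ?_)
      (hmax.aestabilizer_eq_top hS)
    rw [hA'univ, measure_univ] at hA'S
    exact (hA'S.trans_lt (hlt.trans_le (min_le_left _ _))).false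
  exact hS.not_ge (by rwa [hA'0, zero_add])

end MaximalPair

theorem MeasurableSet.exists_isCompact_lt_measure_add {X : Type*} [TopologicalSpace X]
    [MeasurableSpace X] {μ : Measure X} [μ.InnerRegular] {s t : Set X} (hs : MeasurableSet s)
    (ht : MeasurableSet t) {r : ℝ≥0∞} (hr : r < μ s + μ t) :
    ∃ s' ⊆ s, IsCompact s' ∧ ∃ t' ⊆ t, IsCompact t' ∧ r < μ s' + μ t' := by
  rcases eq_or_ne (μ s) 0 with hs0 | hs0
  · obtain ⟨t', ht't, ht', hrt'⟩ := ht.exists_lt_isCompact (by simpa [hs0] using hr)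
    exact ⟨∅, empty_subset _, isCompact_empty, t', ht't, ht', by simpa using hrt'⟩
  rcases eq_or_ne (μ t) 0 with ht0 | ht0
  · obtain ⟨s', hs's, hs', hrs'⟩ := hs.exists_lt_isCompact (by simpa [ht0] using hr)
    exact ⟨s', hs's, hs', ∅, empty_subset _, isCompact_empty, by simpa using hrs'⟩
  obtain ⟨a, ha, b, hb, hab⟩ := ENNReal.exists_lt_add_of_lt_add hr hs0 ht0
  obtain ⟨s', hs's, hs', has'⟩ := hs.exists_lt_isCompact ha
  obtain ⟨t', ht't, ht', hbt'⟩ := ht.exists_lt_isCompact hb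
  exact ⟨s', hs's, hs', t', ht't, ht', hab.trans (ENNReal.add_lt_add has' hbt')⟩

theorem stmt4 {K : Type*} [AddCommGroup K] [TopologicalSpace K] [IsTopologicalAddGroup K]
    [CompactSpace K] [ConnectedSpace K] [TopologicalSpace.MetrizableSpace K]
    [MeasurableSpace K] [BorelSpace K]
    (m : Measure K) [m.IsAddHaarMeasure] [IsProbabilityMeasure m]
    (I J : Set K) (hI : MeasurableSet I) (hJ : MeasurableSet J)
    (hIne : I.Nonempty) (hJne : J.Nonempty) :
    min 1 (m I + m J) ≤ m (J - I) := by
  obtain ⟨i, hi⟩ := hIne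
  obtain ⟨j, hj⟩ := hJne
  refine le_of_forall_lt fun r hr => ?_
  obtain ⟨D, hDI, hD, C, hCJ, hC, hrDC⟩ :=
    hI.exists_isCompact_lt_measure_add hJ (hr.trans_le (min_le_right _ _))
  have hsub : -insert i D + insert j C ⊆ J - I := by
    rw [sub_eq_add_neg, add_comm]
    exact add_subset_add (insert_subset hj hCJ) (neg_subset_neg.2 (insert_subset hi hDI))
  calc r < min 1 (m (-insert i D) + m (insert j C)) := by
        refine lt_min (hr.trans_le (min_le_left _ _)) (hrDC.trans_le ?_)
        rw [Measure.measure_neg]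
        gcongr <;> exact subset_insert _ _
    _ ≤ m (-insert i D + insert j C) :=
        min_one_add_le_measure_add (hD.insert i).neg (hC.insert j) (insert_nonempty _ _).neg
          (insert_nonempty _ _)
    _ ≤ m (J - I) := measure_mono hsub
end

section
/- Let K be a compact metrizable abelian group with Haar probability measure m, and let I be a measurable subset with m(I) > 0 and m(I - I) < (3/2) m(I). Then I - I is an open subgroup of K. -/
/-!
For `x = a - b ∈ I - I`, both `x +ᵥ I` and `I` lie in `a +ᵥ (I - I)`, of measure `< 3/2 m(I)`, so by
inclusion–exclusion `(x +ᵥ I) ∩ I` has measure `> m(I)/2`. Two such subsets of `I` must meet, and a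
common point `x + a = y + b` gives `x - y = b - a ∈ I - I`. Hence `I - I` is a subgroup; by
Steinhaus' theorem it is a neighbourhood of `0`, so it is open.
-/

open MeasureTheory
open scoped Pointwise

lemma ENNReal.three_halves_mul_add_half (a : ENNReal) : 3 / 2 * a + a / 2 = 2 * a := by
  rw [ENNReal.div_eq_inv_mul, ENNReal.div_eq_inv_mul, mul_assoc, ← mul_add,
    show 3 * a + a = 2 * (2 * a) by ring, ← mul_assoc,
    ENNReal.inv_mul_cancel two_ne_zero ENNReal.ofNat_ne_top, one_mul]

section SmallDoubling

variable {K : Type*} [AddCommGroup K] [MeasurableSpace K] [MeasurableAdd K]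
  {m : Measure K} [m.IsAddLeftInvariant] {I : Set K}

lemma half_measure_lt_measure_vadd_inter (hI : MeasurableSet I) (hIfin : m I ≠ ⊤)
    (h : m (I - I) < 3 / 2 * m I) {x : K} (hx : x ∈ I - I) :
    m I / 2 < m ((x +ᵥ I) ∩ I) := by
  obtain ⟨a, ha, b, hb, rfl⟩ := hx
  have hunion : ((a - b) +ᵥ I) ∪ I ⊆ a +ᵥ (I - I) := by
    rintro z (⟨i, hi, rfl⟩ | hz)
    · exact ⟨i - b, Set.sub_mem_sub hi hb, by simp only [vadd_eq_add]; abel⟩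
    · exact ⟨z - a, Set.sub_mem_sub hz ha, by simp only [vadd_eq_add]; abel⟩
  by_contra! hinter
  refine lt_irrefl (2 * m I) ?_
  calc 2 * m I = m ((a - b) +ᵥ I) + m I := by rw [measure_vadd, two_mul]
    _ = m (((a - b) +ᵥ I) ∪ I) + m (((a - b) +ᵥ I) ∩ I) :=
        (measure_union_add_inter' (hI.const_vadd _) I).symm
    _ < 3 / 2 * m I + m I / 2 :=
        ENNReal.add_lt_add_of_lt_of_le
          (ne_top_of_le_ne_top (ENNReal.div_ne_top hIfin two_ne_zero) hinter)
          (((measure_mono hunion).trans_eq (measure_vadd _ _ _)).trans_lt h) hinter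
    _ = 2 * m I := ENNReal.three_halves_mul_add_half _

lemma sub_mem_sub_self_of_measure_lt (hI : MeasurableSet I) (hIfin : m I ≠ ⊤)
    (h : m (I - I) < 3 / 2 * m I) {x y : K} (hx : x ∈ I - I) (hy : y ∈ I - I) :
    x - y ∈ I - I := by
  have hlt : m I < m ((x +ᵥ I) ∩ I) + m ((y +ᵥ I) ∩ I) := by
    calc m I = m I / 2 + m I / 2 := (ENNReal.add_halves _).symm
      _ < _ := ENNReal.add_lt_add (half_measure_lt_measure_vadd_inter hI hIfin h hx)
          (half_measure_lt_measure_vadd_inter hI hIfin h hy)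
  obtain ⟨z, ⟨⟨a, ha, rfl⟩, -⟩, ⟨b, hb, hab⟩, -⟩ :=
    nonempty_inter_of_measure_lt_add m ((hI.const_vadd y).inter hI) Set.inter_subset_right
      Set.inter_subset_right hlt
  refine ⟨b, hb, a, ha, ?_⟩
  simp only [vadd_eq_add] at hab
  rw [sub_eq_sub_iff_add_eq_add, add_comm, hab]

end SmallDoubling

theorem stmt5_general {K : Type*} [AddCommGroup K] [TopologicalSpace K] [IsTopologicalAddGroup K]
    [CompactSpace K]
    [MeasurableSpace K] [BorelSpace K]
    (m : Measure K) [m.IsAddHaarMeasure]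
    (I : Set K) (hI : MeasurableSet I) (hIpos : 0 < m I)
    (h : m (I - I) < (3 / 2 : ENNReal) * m I) :
    ∃ H : AddSubgroup K, IsOpen (H : Set K) ∧ I - I = (H : Set K) := by
  have hIfin : m I ≠ ⊤ := measure_ne_top m I
  have hne : I.Nonempty := nonempty_of_measure_ne_zero hIpos.ne'
  let H := AddSubgroup.ofSub (I - I) (hne.sub hne) fun x hx y hy => by
    simpa only [sub_eq_add_neg] using sub_mem_sub_self_of_measure_lt hI hIfin h hx hy
  exact ⟨H, H.isOpen_of_mem_nhds (g := 0)
    (m.sub_mem_nhds_zero_of_addHaar_pos_ne_top I hI hIpos hIfin), rfl⟩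

theorem stmt5 {K : Type*} [AddCommGroup K] [TopologicalSpace K] [IsTopologicalAddGroup K]
    [CompactSpace K] [TopologicalSpace.MetrizableSpace K]
    [MeasurableSpace K] [BorelSpace K]
    (m : Measure K) [m.IsAddHaarMeasure] [IsProbabilityMeasure m]
    (I : Set K) (hI : MeasurableSet I) (hIpos : 0 < m I)
    (h : m (I - I) < (3 / 2 : ENNReal) * m I) :
    ∃ H : AddSubgroup K, IsOpen (H : Set K) ∧ I - I = (H : Set K) :=
  stmt5_general m I hI hIpos h
end

section
/- Let G be a countable abelian group acting ergodically by measure-preserving transformations on a probability space (X,μ), and let A, B be measurable subsets with positive measure. Then there exists a G-invariant measurable μ-conull set X₁ ⊆ X such that for all x ∈ X₁, the set of transfer times R_{A,B} = {g ∈ G : μ(A ∩ g⁻¹B) > 0} equals B_x - A_x = {b - a : b ∈ B_x, a ∈ A_x}, where A_x = {g : gx ∈ A} and B_x = {g : gx ∈ B}. -/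
/-! For each `g`, the points `x` with `g ∈ B_x - A_x` form the `G`-saturation `⋃ a, a⁻¹(A ∩ g⁻¹B)`
of `A ∩ g⁻¹B`. This saturation is invariant, hence null or conull by ergodicity, and it is null
exactly when `A ∩ g⁻¹B` is, because the action preserves `μ`. Since `G` is countable, the points
at which all these dichotomies hold form an invariant conull set. -/

open scoped Pointwise

open MeasureTheory

lemma preimage_iUnion_preimage {G X : Type*} [AddGroup G] {T : G → X → X}
    (hTadd : ∀ g h x, T (g + h) x = T g (T h x)) (S : Set X) (h : G) :
    T h ⁻¹' ⋃ a, T a ⁻¹' S = ⋃ a, T a ⁻¹' S := by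
  have hcomp : ∀ a, T h ⁻¹' (T a ⁻¹' S) = T (a + h) ⁻¹' S := fun a => by
    ext x
    simp only [Set.mem_preimage, hTadd]
  simp only [Set.preimage_iUnion, hcomp]
  exact (Equiv.addRight h).surjective.iUnion_comp fun a => T a ⁻¹' S

section Saturation

variable {G X : Type*} [MeasurableSpace X] {μ : Measure X} {T : G → X → X}

lemma measure_iUnion_preimage_eq_zero_iff [Zero G] [Countable G] (hTmp : ∀ g, MeasurePreserving (T g) μ μ)
    {S : Set X} (hS : MeasurableSet S) :
    μ (⋃ a, T a ⁻¹' S) = 0 ↔ μ S = 0 := by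
  have hpre : ∀ a, μ (T a ⁻¹' S) = μ S := fun a =>
    (hTmp a).measure_preimage hS.nullMeasurableSet
  refine ⟨fun h => ?_, fun h => measure_iUnion_null fun a => (hpre a).trans h⟩
  rw [← hpre 0]
  exact measure_mono_null (Set.subset_iUnion (fun a => T a ⁻¹' S) 0) h

lemma ae_mem_iUnion_preimage_iff [AddGroup G] [Countable G] [IsProbabilityMeasure μ]
    (hTadd : ∀ g h x, T (g + h) x = T g (T h x)) (hTmp : ∀ g, MeasurePreserving (T g) μ μ)
    (herg : ∀ S : Set X, MeasurableSet S → (∀ g, T g ⁻¹' S = S) → μ S = 0 ∨ μ S = 1)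
    {S : Set X} (hS : MeasurableSet S) :
    ∀ᵐ x ∂μ, x ∈ ⋃ a, T a ⁻¹' S ↔ 0 < μ S := by
  have hU : MeasurableSet (⋃ a, T a ⁻¹' S) :=
    MeasurableSet.iUnion fun a => (hTmp a).measurable hS
  by_cases hS0 : μ S = 0
  · have hnull := (measure_iUnion_preimage_eq_zero_iff hTmp hS).2 hS0
    filter_upwards [measure_eq_zero_iff_ae_notMem.1 hnull] with x hx
    simp [hx, hS0]
  · have hfull : μ (⋃ a, T a ⁻¹' S) = 1 :=
      (herg _ hU (preimage_iUnion_preimage hTadd S)).resolve_left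
        (mt (measure_iUnion_preimage_eq_zero_iff hTmp hS).1 hS0)
    have hae : ∀ᵐ x ∂μ, x ∈ ⋃ a, T a ⁻¹' S := by
      rw [ae_mem_iff_measure_eq hU.nullMeasurableSet, measure_univ]
      exact hfull
    filter_upwards [hae] with x hx
    simp [hx, pos_iff_ne_zero, hS0]

end Saturation

lemma setOf_mem_sub_eq_iUnion_preimage {G X : Type*} [AddCommGroup G] {T : G → X → X}
    (hTadd : ∀ g h x, T (g + h) x = T g (T h x)) (A B : Set X) (g : G) :
    {x | g ∈ {h | T h x ∈ B} - {h | T h x ∈ A}} = ⋃ a, T a ⁻¹' (A ∩ T g ⁻¹' B) := by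
  ext x
  simp only [Set.mem_ofPred_eq, Set.mem_sub, Set.mem_iUnion, Set.mem_preimage, Set.mem_inter_iff,
    ← hTadd]
  constructor
  · rintro ⟨b, hb, a, ha, rfl⟩
    exact ⟨a, ha, by rwa [sub_add_cancel]⟩
  · rintro ⟨a, ha, hb⟩
    exact ⟨g + a, hb, a, ha, add_sub_cancel_right g a⟩

theorem stmt9_general {G X : Type*} [AddCommGroup G] [Countable G]
    [MeasurableSpace X] (μ : Measure X) [IsProbabilityMeasure μ]
    (T : G → X → X)
    (hTadd : ∀ g h x, T (g + h) x = T g (T h x))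
    (hTmp : ∀ g, MeasurePreserving (T g) μ μ)
    (herg : ∀ S : Set X, MeasurableSet S → (∀ g, T g ⁻¹' S = S) → μ S = 0 ∨ μ S = 1)
    (A B : Set X) (hA : MeasurableSet A) (hB : MeasurableSet B) :
    ∃ X₁ : Set X, MeasurableSet X₁ ∧ μ X₁ᶜ = 0 ∧
      (∀ g : G, T g ⁻¹' X₁ = X₁) ∧
      ∀ x ∈ X₁,
        {g : G | 0 < μ (A ∩ T g ⁻¹' B)}
          = {g : G | T g x ∈ B} - {g : G | T g x ∈ A} := by
  set U : G → Set X := fun g => ⋃ a, T a ⁻¹' (A ∩ T g ⁻¹' B)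
  have hS : ∀ g, MeasurableSet (A ∩ T g ⁻¹' B) := fun g => hA.inter ((hTmp g).measurable hB)
  have hU : ∀ g, MeasurableSet (U g) := fun g =>
    MeasurableSet.iUnion fun a => (hTmp a).measurable (hS g)
  refine ⟨⋂ g, {x | x ∈ U g ↔ 0 < μ (A ∩ T g ⁻¹' B)}, ?_, ?_, ?_, ?_⟩
  · exact MeasurableSet.iInter fun g =>
      measurableSet_setOfPred.2 ((measurableSet_setOfPred.1 (hU g)).iff measurable_const)
  · rw [← mem_ae_iff, countable_iInter_mem]
    exact fun g => ae_mem_iUnion_preimage_iff hTadd hTmp herg (hS g)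
  · intro h
    simp only [Set.preimage_iInter]
    refine Set.iInter_congr fun g => ?_
    ext x
    change (T h x ∈ U g ↔ _) ↔ (x ∈ U g ↔ _)
    rw [← Set.mem_preimage (f := T h), preimage_iUnion_preimage hTadd]
  · intro x hx
    ext g
    change _ ↔ x ∈ {x | g ∈ {h | T h x ∈ B} - {h | T h x ∈ A}}
    rw [setOf_mem_sub_eq_iUnion_preimage hTadd]
    exact (Set.mem_iInter.1 hx g).symm

theorem stmt9 {G X : Type*} [AddCommGroup G] [Countable G]
    [MeasurableSpace X] (μ : Measure X) [IsProbabilityMeasure μ]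
    (T : G → X → X)
    (hT0 : ∀ x, T 0 x = x)
    (hTadd : ∀ g h x, T (g + h) x = T g (T h x))
    (hTmp : ∀ g, MeasurePreserving (T g) μ μ)
    (herg : ∀ S : Set X, MeasurableSet S → (∀ g, T g ⁻¹' S = S) → μ S = 0 ∨ μ S = 1)
    (A B : Set X) (hA : MeasurableSet A) (hB : MeasurableSet B)
    (hApos : 0 < μ A) (hBpos : 0 < μ B) :
    ∃ X₁ : Set X, MeasurableSet X₁ ∧ μ X₁ᶜ = 0 ∧
      (∀ g : G, T g ⁻¹' X₁ = X₁) ∧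
      ∀ x ∈ X₁,
        {g : G | 0 < μ (A ∩ T g ⁻¹' B)}
          = {g : G | T g x ∈ B} - {g : G | T g x ∈ A} :=
  stmt9_general μ T hTadd hTmp herg A B hA hB
end

section
/- Let G be a countable abelian group acting ergodically and measure-preservingly on a probability space (X,μ), with a sequence (F_n) of finite subsets of G along which pointwise ergodic averages converge almost everywhere to the space average for every bounded measurable function. Then for all measurable A, B ⊆ X of positive measure, the lower asymptotic density of R_{A,B} = {g : μ(A ∩ g⁻¹B) > 0} along (F_n) satisfies d̲(R_{A,B}) ≥ max(μ(A), μ(B)). -/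
open MeasureTheory
open scoped Classical

/-!
Put `f_n(x) = 1_A(x) · |F_n|⁻¹ ∑_{g ∈ F_n} 1_B(g x)`. The ergodic averages of `1_B` tend to `μ(B)`
almost everywhere, so by dominated convergence `∫ f_n = |F_n|⁻¹ ∑_{g ∈ F_n} μ(A ∩ g⁻¹B)` tends to
`μ(A) μ(B)`. Each summand vanishes unless `g ∈ R_{A,B}`, and is at most `min (μ A) (μ B)`; hence
`μ(A) μ(B) ≤ min (μ A) (μ B) · d̲(R_{A,B})`, and `μ(A) μ(B) / min (μ A) (μ B) = max (μ A) (μ B)`.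
-/

open Filter Finset

theorem le_liminf_div_of_tendsto_of_le_mul {u c : ℕ → ℝ} {L m : ℝ}
    (hu : Tendsto u atTop (nhds L)) (hm : 0 < m) (huc : ∀ n, u n ≤ m * c n)
    (hc : ∀ n, c n ≤ 1) :
    L / m ≤ liminf c atTop := by
  have hdiv : Tendsto (fun n => u n / m) atTop (nhds (L / m)) := hu.div_const m
  rw [← hdiv.liminf_eq]
  refine liminf_le_liminf (Eventually.of_forall fun n => ?_) hdiv.isBoundedUnder_ge
    (isCoboundedUnder_ge_of_le atTop hc)
  rw [div_le_iff₀ hm, mul_comm]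
  exact huc n

theorem Set.indicator_inter_preimage_eq_mul {X Y M₀ : Type*} [MulZeroOneClass M₀]
    {A : Set X} {B : Set Y} (f : X → Y) (x : X) :
    (A ∩ f ⁻¹' B).indicator (1 : X → M₀) x = A.indicator 1 x * B.indicator 1 (f x) := by
  rw [Set.inter_indicator_one, Pi.mul_apply, ← Set.indicator_comp_right]
  rfl

section Recurrence

variable {ι X : Type*} [MeasurableSpace X] {μ : Measure X} [IsFiniteMeasure μ]
  {T : ι → X → X} {A B : Set X}

theorem sum_measureReal_inter_preimage_le (hT : ∀ g, MeasurePreserving (T g) μ μ)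
    (hB : MeasurableSet B) (s : Finset ι) :
    ∑ g ∈ s, μ.real (A ∩ T g ⁻¹' B) ≤
      min (μ.real A) (μ.real B) * #(s.filter fun g => 0 < μ (A ∩ T g ⁻¹' B)) := by
  have hle : ∀ g, μ.real (A ∩ T g ⁻¹' B) ≤ min (μ.real A) (μ.real B) := fun g =>
    le_min (measureReal_mono Set.inter_subset_left)
      ((measureReal_mono Set.inter_subset_right).trans_eq ((hT g).measureReal_preimage
        hB.nullMeasurableSet))
  rw [← sum_filter_of_ne fun g _ hne =>
      ((measureReal_ne_zero_iff (measure_ne_top μ _)).mp hne).bot_lt,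
    mul_comm, ← nsmul_eq_mul]
  exact sum_le_card_nsmul _ _ _ fun g _ => hle g

theorem tendsto_average_measureReal_inter_preimage (hT : ∀ g, Measurable (T g))
    (hA : MeasurableSet A) (hB : MeasurableSet B) (F : ℕ → Finset ι)
    (hconv : ∀ᵐ x ∂μ, Tendsto
      (fun n => (∑ g ∈ F n, B.indicator (1 : X → ℝ) (T g x)) / (#(F n) : ℝ))
      atTop (nhds (μ.real B))) :
    Tendsto (fun n => (∑ g ∈ F n, μ.real (A ∩ T g ⁻¹' B)) / #(F n)) atTop
      (nhds (μ.real A * μ.real B)) := by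
  set f : ℕ → X → ℝ := fun n x => (∑ g ∈ F n, (A ∩ T g ⁻¹' B).indicator 1 x) / #(F n)
  have hmeas : ∀ g, MeasurableSet (A ∩ T g ⁻¹' B) := fun g => hA.inter (hT g hB)
  have hint : ∀ n, ∫ x, f n x ∂μ = (∑ g ∈ F n, μ.real (A ∩ T g ⁻¹' B)) / #(F n) := fun n => by
    rw [integral_div, integral_finsetSum _ fun g _ => (integrable_const 1).indicator (hmeas g)]
    simp_rw [integral_indicator_one (hmeas _)]
  have hbound : ∀ n x, ‖f n x‖ ≤ 1 := fun n x => by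
    have hsum : ∑ g ∈ F n, (A ∩ T g ⁻¹' B).indicator (1 : X → ℝ) x ≤ #(F n) := by
      simpa using sum_le_sum fun g (_ : g ∈ F n) =>
        Set.indicator_le_self' (fun _ _ => zero_le_one) (f := (1 : X → ℝ)) x
    refine (Real.norm_of_nonneg (div_nonneg (sum_nonneg fun g _ =>
      Set.indicator_nonneg (fun _ _ => zero_le_one) x) (Nat.cast_nonneg _))).trans_le ?_
    exact div_le_one_of_le₀ hsum (Nat.cast_nonneg _)
  have hlim : ∀ᵐ x ∂μ, Tendsto (fun n => f n x) atTop (nhds (A.indicator 1 x * μ.real B)) := by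
    filter_upwards [hconv] with x hx
    simp_rw [f, Set.indicator_inter_preimage_eq_mul, ← mul_sum, mul_div_assoc]
    exact hx.const_mul _
  have hDC := tendsto_integral_of_dominated_convergence (fun _ => (1 : ℝ))
    (fun n => (Finset.measurable_sum _ fun g _ =>
      (measurable_const.indicator (hmeas g))).div_const _ |>.aestronglyMeasurable)
    (integrable_const 1) (fun n => Eventually.of_forall (hbound n)) hlim
  rw [integral_mul_const, integral_indicator_one hA] at hDC
  exact hDC.congr hint

end Recurrence

theorem stmt11_general {G X : Type*}
    [MeasurableSpace X] (μ : Measure X) [IsProbabilityMeasure μ]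
    (T : G → X → X)
    (hTmp : ∀ g, MeasurePreserving (T g) μ μ)
    (F : ℕ → Finset G)
    (hF : ∀ φ : X → ℝ, Measurable φ → (∃ C, ∀ x, |φ x| ≤ C) →
      ∀ᵐ x ∂μ, Filter.Tendsto
        (fun n => (∑ g ∈ F n, φ (T g x)) / ((F n).card : ℝ))
        Filter.atTop (nhds (∫ x, φ x ∂μ)))
    (A B : Set X) (hA : MeasurableSet A) (hB : MeasurableSet B)
    (hApos : 0 < μ A) (hBpos : 0 < μ B) :
    max (μ A).toReal (μ B).toReal ≤
      Filter.liminf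
        (fun n => (((F n).filter (fun g => 0 < μ (A ∩ T g ⁻¹' B))).card : ℝ) / ((F n).card : ℝ))
        Filter.atTop := by
  have hconv := hF (B.indicator 1) (measurable_const.indicator hB)
    ⟨1, fun x => by by_cases hx : x ∈ B <;> simp [hx]⟩
  rw [integral_indicator_one hB] at hconv
  have hmin : 0 < min (μ.real A) (μ.real B) :=
    lt_min (ENNReal.toReal_pos hApos.ne' (measure_ne_top μ A))
      (ENNReal.toReal_pos hBpos.ne' (measure_ne_top μ B))
  rw [← measureReal_def, ← measureReal_def,
    eq_div_of_mul_eq hmin.ne' (max_mul_min (μ.real A) (μ.real B))]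
  refine le_liminf_div_of_tendsto_of_le_mul
    (tendsto_average_measureReal_inter_preimage (fun g => (hTmp g).measurable) hA hB F hconv)
    hmin (fun n => ?_) (fun n => div_le_one_of_le₀ (by exact_mod_cast card_filter_le _ _)
      (Nat.cast_nonneg _))
  rw [← mul_div_assoc]
  exact div_le_div_of_nonneg_right (sum_measureReal_inter_preimage_le hTmp hB (F n))
    (Nat.cast_nonneg _)

theorem stmt11 {G X : Type*} [AddCommGroup G] [Countable G]
    [MeasurableSpace X] (μ : Measure X) [IsProbabilityMeasure μ]
    (T : G → X → X)
    (hT0 : ∀ x, T 0 x = x)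
    (hTadd : ∀ g h x, T (g + h) x = T g (T h x))
    (hTmp : ∀ g, MeasurePreserving (T g) μ μ)
    (herg : ∀ S : Set X, MeasurableSet S → (∀ g, T g ⁻¹' S = S) → μ S = 0 ∨ μ S = 1)
    (F : ℕ → Finset G) (hFne : ∀ n, (F n).Nonempty)
    (hF : ∀ φ : X → ℝ, Measurable φ → (∃ C, ∀ x, |φ x| ≤ C) →
      ∀ᵐ x ∂μ, Filter.Tendsto
        (fun n => (∑ g ∈ F n, φ (T g x)) / ((F n).card : ℝ))
        Filter.atTop (nhds (∫ x, φ x ∂μ)))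
    (A B : Set X) (hA : MeasurableSet A) (hB : MeasurableSet B)
    (hApos : 0 < μ A) (hBpos : 0 < μ B) :
    max (μ A).toReal (μ B).toReal ≤
      Filter.liminf
        (fun n => (((F n).filter (fun g => 0 < μ (A ∩ T g ⁻¹' B))).card : ℝ) / ((F n).card : ℝ))
        Filter.atTop :=
  stmt11_general μ T hTmp F hF A B hA hB hApos hBpos
end

section
/- Let G be a countable abelian group acting ergodically measure-preservingly on (X,μ) with a pointwise-ergodic sequence (F_n). If A ⊆ X is measurable with 0 < μ(A) < 1/2 and the lower asymptotic density of the return-time set R_A = {g : μ(A ∩ g⁻¹A) > 0} satisfies d̲(R_A) < (3/2)μ(A), then R_A is a finite-index subgroup of G with index [G : R_A] ≤ 1/μ(A). -/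
/-! If `g` is a return time, then almost every point `x` of `A ∩ T g ⁻¹' A` has the property
that every `k` with `T k x ∈ A ∪ T g ⁻¹' A` is again a return time (this uses commutativity).
Averaging along `F n` the visits of the orbit of such an `x` to `A ∪ T g ⁻¹' A` therefore
bounds `d̲(R_A)` from below by `μ (A ∪ T g ⁻¹' A) = 2 μ A - μ (A ∩ T g ⁻¹' A)`, so the
hypothesis `d̲(R_A) < 3/2 μ A` forces `μ (A ∩ T g ⁻¹' A) > μ A / 2` for every return time `g`.
For two return times `g, h` the sets `A ∩ T g ⁻¹' A` and `T g ⁻¹' (A ∩ T h ⁻¹' A)` both fill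
more than half of `T g ⁻¹' A`, so they meet in positive measure, and `g + h` is a return time.
Finally, translates of `A` by representatives of distinct cosets of `R_A` are almost disjoint,
so there are at most `1 / μ A` cosets. -/

open MeasureTheory Filter
open scoped Classical

def returnTimes {G X : Type*} [MeasurableSpace X] (μ : Measure X) (T : G → X → X) (A : Set X) :
    Set G :=
  {g | 0 < μ (A ∩ T g ⁻¹' A)}

noncomputable def lowerDensity {G : Type*} (F : ℕ → Finset G) (R : Set G) : ℝ :=
  liminf (fun n => (((F n).filter (· ∈ R)).card : ℝ) / ((F n).card : ℝ)) atTop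

def IsPointwiseErgodic {G X : Type*} [MeasurableSpace X] (μ : Measure X) (T : G → X → X)
    (F : ℕ → Finset G) : Prop :=
  ∀ φ : X → ℝ, Measurable φ → (∃ C, ∀ x, |φ x| ≤ C) →
    ∀ᵐ x ∂μ, Tendsto (fun n => (∑ g ∈ F n, φ (T g x)) / ((F n).card : ℝ)) atTop
      (nhds (∫ x, φ x ∂μ))

lemma preimage_preimage_of_add {G X : Type*} [AddCommGroup G] {T : G → X → X}
    (hTadd : ∀ g h x, T (g + h) x = T g (T h x)) (g h : G) (S : Set X) :
    T g ⁻¹' (T h ⁻¹' S) = T (g + h) ⁻¹' S := by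
  ext x
  rw [Set.mem_preimage, Set.mem_preimage, Set.mem_preimage, add_comm, hTadd]

section

variable {G X : Type*} [MeasurableSpace X] {μ : Measure X} {T : G → X → X} {A : Set X}

lemma le_lowerDensity_of_tendsto {F : ℕ → Finset G} {V R : Set G} (hVR : V ⊆ R) {c : ℝ}
    (hV : Tendsto (fun n => (((F n).filter (· ∈ V)).card : ℝ) / ((F n).card : ℝ)) atTop
      (nhds c)) :
    c ≤ lowerDensity F R := by
  rw [← hV.liminf_eq]
  refine liminf_le_liminf (.of_forall fun n => ?_) hV.isBoundedUnder_ge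
    (isBoundedUnder_of ⟨1, fun n => ?_⟩).isCoboundedUnder_ge
  · gcongr
  · exact div_le_one_of_le₀ (by exact_mod_cast Finset.card_filter_le _ _) (Nat.cast_nonneg _)

lemma IsPointwiseErgodic.ae_tendsto_visitFrequency {F : ℕ → Finset G}
    (hF : IsPointwiseErgodic μ T F) {S : Set X} (hS : MeasurableSet S) :
    ∀ᵐ x ∂μ, Tendsto (fun n => (((F n).filter (fun k => T k x ∈ S)).card : ℝ) /
      ((F n).card : ℝ)) atTop (nhds (μ.real S)) := by
  have hbdd : ∃ C, ∀ x, |S.indicator (1 : X → ℝ) x| ≤ C :=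
    ⟨1, fun x => by by_cases hx : x ∈ S <;> simp [hx]⟩
  filter_upwards [hF _ (measurable_one.indicator hS) hbdd] with x hx
  rw [integral_indicator_one hS] at hx
  simpa [Set.indicator_apply, Finset.sum_boole] using hx

lemma ae_forall_notMem_of_notMem_returnTimes [Countable G] :
    ∀ᵐ x ∂μ, ∀ k ∉ returnTimes μ T A, x ∉ A ∩ T k ⁻¹' A := by
  refine ae_all_iff.2 fun k => ?_
  by_cases hk : k ∈ returnTimes μ T A
  · exact .of_forall fun _ h => absurd hk h
  · have hnull : μ (A ∩ T k ⁻¹' A) = 0 := nonpos_iff_eq_zero.1 (not_lt.1 hk)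
    exact (measure_eq_zero_iff_ae_notMem.1 hnull).mono fun _ hx _ => hx

lemma measure_inter_pos_of_measureReal_lt_add [IsFiniteMeasure μ] {s t u : Set X}
    (ht : MeasurableSet t) (hsu : s ⊆ u) (htu : t ⊆ u) (h : μ.real u < μ.real s + μ.real t) :
    0 < μ (s ∩ t) := by
  refine pos_iff_ne_zero.2 fun hnull => ?_
  have hunion := measureReal_union_add_inter (μ := μ) (s := s) ht
  rw [measureReal_def (s := s ∩ t), hnull, ENNReal.toReal_zero, add_zero] at hunion
  linarith [measureReal_mono (μ := μ) (Set.union_subset hsu htu)]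

variable [AddCommGroup G]

lemma measure_preimage_inter_preimage (hTadd : ∀ g h x, T (g + h) x = T g (T h x))
    (hTmp : ∀ g, MeasurePreserving (T g) μ μ) (hA : MeasurableSet A) (g k : G) :
    μ (T g ⁻¹' A ∩ T k ⁻¹' A) = μ (A ∩ T (k - g) ⁻¹' A) := by
  rw [← (hTmp g).measure_preimage (hA.inter ((hTmp _).measurable hA)).nullMeasurableSet,
    Set.preimage_inter, preimage_preimage_of_add hTadd, add_sub_cancel]

lemma zero_mem_returnTimes (hT0 : ∀ x, T 0 x = x) (hApos : 0 < μ A) :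
    (0 : G) ∈ returnTimes μ T A := by
  simpa [returnTimes, Set.preimage, hT0] using hApos

lemma neg_mem_returnTimes (hT0 : ∀ x, T 0 x = x) (hTadd : ∀ g h x, T (g + h) x = T g (T h x))
    (hTmp : ∀ g, MeasurePreserving (T g) μ μ) (hA : MeasurableSet A) {g : G}
    (hg : g ∈ returnTimes μ T A) : -g ∈ returnTimes μ T A := by
  have h := measure_preimage_inter_preimage hTadd hTmp hA g 0
  have hT0A : T 0 ⁻¹' A = A := by ext; simp [hT0]
  rw [hT0A, zero_sub, Set.inter_comm] at h
  rw [returnTimes, Set.mem_ofPred_eq, ← h]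
  exact hg

lemma add_mem_returnTimes [IsFiniteMeasure μ] (hTadd : ∀ g h x, T (g + h) x = T g (T h x))
    (hTmp : ∀ g, MeasurePreserving (T g) μ μ) (hA : MeasurableSet A) {g h : G}
    (hg : μ.real A < 2 * μ.real (A ∩ T g ⁻¹' A))
    (hh : μ.real A < 2 * μ.real (A ∩ T h ⁻¹' A)) :
    g + h ∈ returnTimes μ T A := by
  have hmeas : ∀ S, MeasurableSet S → μ.real (T g ⁻¹' S) = μ.real S :=
    fun S hS => (hTmp g).measureReal_preimage hS.nullMeasurableSet
  have hAh : MeasurableSet (A ∩ T h ⁻¹' A) := hA.inter ((hTmp h).measurable hA)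
  have hpos : 0 < μ ((A ∩ T g ⁻¹' A) ∩ T g ⁻¹' (A ∩ T h ⁻¹' A)) :=
    measure_inter_pos_of_measureReal_lt_add ((hTmp g).measurable hAh) Set.inter_subset_right
      (Set.preimage_mono Set.inter_subset_left)
      (by rw [hmeas A hA, hmeas _ hAh]; linarith)
  refine hpos.trans_le (measure_mono ?_)
  rw [Set.preimage_inter, preimage_preimage_of_add hTadd]
  exact fun x ⟨⟨hxA, _⟩, _, hx⟩ => ⟨hxA, hx⟩

lemma measureReal_union_le_lowerDensity [Countable G]
    (hTadd : ∀ g h x, T (g + h) x = T g (T h x)) (hTmp : ∀ g, MeasurePreserving (T g) μ μ)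
    {F : ℕ → Finset G} (hF : IsPointwiseErgodic μ T F) (hA : MeasurableSet A) {g : G}
    (hg : g ∈ returnTimes μ T A) :
    μ.real (A ∪ T g ⁻¹' A) ≤ lowerDensity F (returnTimes μ T A) := by
  have hgood := ae_forall_notMem_of_notMem_returnTimes (μ := μ) (T := T) (A := A)
  have hfreq := hF.ae_tendsto_visitFrequency (hA.union ((hTmp g).measurable hA))
  obtain ⟨x, ⟨hxA, hgxA⟩, hfreq, hx, hgx⟩ := Measure.exists_mem_of_measure_ne_zero_of_ae hg.ne'
    (ae_restrict_of_ae (hfreq.and (hgood.and ((hTmp g).quasiMeasurePreserving.ae hgood))))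
  refine le_lowerDensity_of_tendsto (V := {k | T k x ∈ A ∪ T g ⁻¹' A}) ?_ hfreq
  rintro k (hk | hk) <;> by_contra hkR
  · exact hx k hkR ⟨hxA, hk⟩
  · refine hgx k hkR ⟨hgxA, ?_⟩
    rwa [Set.mem_preimage, ← hTadd, add_comm, hTadd]

lemma measureReal_lt_two_mul_measureReal_inter [IsFiniteMeasure μ] [Countable G]
    (hTadd : ∀ g h x, T (g + h) x = T g (T h x)) (hTmp : ∀ g, MeasurePreserving (T g) μ μ)
    {F : ℕ → Finset G} (hF : IsPointwiseErgodic μ T F) (hA : MeasurableSet A)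
    (hsmall : lowerDensity F (returnTimes μ T A) < 3 / 2 * μ.real A) {g : G}
    (hg : g ∈ returnTimes μ T A) :
    μ.real A < 2 * μ.real (A ∩ T g ⁻¹' A) := by
  have hunion := measureReal_union_le_lowerDensity hTadd hTmp hF hA hg
  have hsum := measureReal_union_add_inter (μ := μ) (s := A) ((hTmp g).measurable hA)
  rw [(hTmp g).measureReal_preimage hA.nullMeasurableSet] at hsum
  linarith

lemma aedisjoint_preimage_of_sub_notMem (hTadd : ∀ g h x, T (g + h) x = T g (T h x))
    (hTmp : ∀ g, MeasurePreserving (T g) μ μ) (hA : MeasurableSet A) {g k : G}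
    (h : k - g ∉ returnTimes μ T A) : AEDisjoint μ (T g ⁻¹' A) (T k ⁻¹' A) := by
  rw [AEDisjoint, measure_preimage_inter_preimage hTadd hTmp hA]
  exact nonpos_iff_eq_zero.1 (not_lt.1 h)

lemma card_mul_measureReal_le_one [IsProbabilityMeasure μ]
    (hTadd : ∀ g h x, T (g + h) x = T g (T h x)) (hTmp : ∀ g, MeasurePreserving (T g) μ μ)
    (hA : MeasurableSet A) {H : AddSubgroup G} (hR : returnTimes μ T A ⊆ H)
    (s : Finset (G ⧸ H)) : (s.card : ℝ) * μ.real A ≤ 1 := by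
  have hdisj :
      (s : Set (G ⧸ H)).Pairwise (Function.onFun (AEDisjoint μ) fun q => T q.out ⁻¹' A) := by
    intro q _ q' _ hne
    refine aedisjoint_preimage_of_sub_notMem hTadd hTmp hA fun h => hne ?_
    rw [← q.out_eq', ← q'.out_eq', QuotientAddGroup.eq, neg_add_eq_sub]
    exact hR h
  calc (s.card : ℝ) * μ.real A = ∑ q ∈ s, μ.real (T q.out ⁻¹' A) := by
        simp [(hTmp _).measureReal_preimage hA.nullMeasurableSet]
    _ = μ.real (⋃ q ∈ s, T q.out ⁻¹' A) := (measureReal_biUnion_finset₀ hdisj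
        fun q _ => ((hTmp _).measurable hA).nullMeasurableSet).symm
    _ ≤ 1 := measureReal_le_one

lemma finiteIndex_and_index_le_of_returnTimes_subset [IsProbabilityMeasure μ]
    (hTadd : ∀ g h x, T (g + h) x = T g (T h x)) (hTmp : ∀ g, MeasurePreserving (T g) μ μ)
    (hA : MeasurableSet A) (hApos : 0 < μ A) {H : AddSubgroup G} (hR : returnTimes μ T A ⊆ H) :
    H.FiniteIndex ∧ (H.index : ℝ) ≤ 1 / μ.real A := by
  have hApos' : 0 < μ.real A := ENNReal.toReal_pos hApos.ne' (measure_ne_top μ A)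
  have hcard : ∀ s : Finset (G ⧸ H), (s.card : ℝ) ≤ 1 / μ.real A := fun s =>
    (le_div_iff₀ hApos').2 (card_mul_measureReal_le_one hTadd hTmp hA hR s)
  have : Fintype (G ⧸ H) :=
    fintypeOfFinsetCardLe ⌊1 / μ.real A⌋₊ fun s => Nat.le_floor (hcard s)
  refine ⟨AddSubgroup.finiteIndex_of_finite_quotient, ?_⟩
  rw [AddSubgroup.index_eq_card, Nat.card_eq_fintype_card, ← Finset.card_univ]
  exact hcard Finset.univ

end

theorem stmt12_general {G X : Type*} [AddCommGroup G] [Countable G]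
    [MeasurableSpace X] (μ : Measure X) [IsProbabilityMeasure μ]
    (T : G → X → X)
    (hT0 : ∀ x, T 0 x = x)
    (hTadd : ∀ g h x, T (g + h) x = T g (T h x))
    (hTmp : ∀ g, MeasurePreserving (T g) μ μ)
    (F : ℕ → Finset G)
    (hF : ∀ φ : X → ℝ, Measurable φ → (∃ C, ∀ x, |φ x| ≤ C) →
      ∀ᵐ x ∂μ, Filter.Tendsto
        (fun n => (∑ g ∈ F n, φ (T g x)) / ((F n).card : ℝ))
        Filter.atTop (nhds (∫ x, φ x ∂μ)))
    (A : Set X) (hA : MeasurableSet A) (hApos : 0 < μ A)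
    (hsmall : Filter.liminf
        (fun n => (((F n).filter (fun g => 0 < μ (A ∩ T g ⁻¹' A))).card : ℝ) / ((F n).card : ℝ))
        Filter.atTop < (3 / 2) * (μ A).toReal) :
    ∃ H : AddSubgroup G,
      {g : G | 0 < μ (A ∩ T g ⁻¹' A)} = (H : Set G) ∧
      H.FiniteIndex ∧ (H.index : ℝ) ≤ 1 / (μ A).toReal := by
  have hdensity : lowerDensity F (returnTimes μ T A) < 3 / 2 * μ.real A := by
    -- the two filters differ only in their decidability instances
    unfold lowerDensity returnTimes
    convert hsmall using 8 <;> rfl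
  have hlarge : ∀ g ∈ returnTimes μ T A, μ.real A < 2 * μ.real (A ∩ T g ⁻¹' A) :=
    fun _ => measureReal_lt_two_mul_measureReal_inter hTadd hTmp hF hA hdensity
  let H : AddSubgroup G :=
    { carrier := returnTimes μ T A
      zero_mem' := zero_mem_returnTimes hT0 hApos
      add_mem' := fun hg hh => add_mem_returnTimes hTadd hTmp hA (hlarge _ hg) (hlarge _ hh)
      neg_mem' := neg_mem_returnTimes hT0 hTadd hTmp hA }
  exact ⟨H, rfl, finiteIndex_and_index_le_of_returnTimes_subset hTadd hTmp hA hApos le_rfl⟩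

theorem stmt12 {G X : Type*} [AddCommGroup G] [Countable G]
    [MeasurableSpace X] (μ : Measure X) [IsProbabilityMeasure μ]
    (T : G → X → X)
    (hT0 : ∀ x, T 0 x = x)
    (hTadd : ∀ g h x, T (g + h) x = T g (T h x))
    (hTmp : ∀ g, MeasurePreserving (T g) μ μ)
    (herg : ∀ S : Set X, MeasurableSet S → (∀ g, T g ⁻¹' S = S) → μ S = 0 ∨ μ S = 1)
    (F : ℕ → Finset G) (hFne : ∀ n, (F n).Nonempty)
    (hF : ∀ φ : X → ℝ, Measurable φ → (∃ C, ∀ x, |φ x| ≤ C) →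
      ∀ᵐ x ∂μ, Filter.Tendsto
        (fun n => (∑ g ∈ F n, φ (T g x)) / ((F n).card : ℝ))
        Filter.atTop (nhds (∫ x, φ x ∂μ)))
    (A : Set X) (hA : MeasurableSet A) (hApos : 0 < μ A) (hAhalf : μ A < 1 / 2)
    (hsmall : Filter.liminf
        (fun n => (((F n).filter (fun g => 0 < μ (A ∩ T g ⁻¹' A))).card : ℝ) / ((F n).card : ℝ))
        Filter.atTop < (3 / 2) * (μ A).toReal) :
    ∃ H : AddSubgroup G,
      {g : G | 0 < μ (A ∩ T g ⁻¹' A)} = (H : Set G) ∧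
      H.FiniteIndex ∧ (H.index : ℝ) ≤ 1 / (μ A).toReal :=
  stmt12_general μ T hT0 hTadd hTmp F hF A hA hApos hsmall
end
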